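/- arXiv:2207.09585 — 6 statements merged into one kernel-verified Lean document; each statement's English description precedes it below -/
import Mathlib

section
/- Let p, λ ∈ ℝ with p ≠ 0, and let γ = (γ₁, γ₂) : ℝ → ℝ² be a differentiable curve on an open interval I, parametrized by arc length (γ₁'(t)² + γ₂'(t)² = 1 for all t ∈ I), with γ₁'(t)·γ₂'(t) ≠ 0 for all t ∈ I. If γ lies on the parabola p² − 2pλ + 2p·γ₁(t) = γ₂(t)² for all t ∈ I, then γ satisfies the differential equation λ − γ₁(t) + (γ₂(t)/(2γ₁'(t)γ₂'(t)))·(γ₁'(t)² − γ₂'(t)²) = 0 for all t ∈ I. -/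
/-- Example 2 of the paper: an arc-length parametrized curve `γ = (γ₁, γ₂)` lying on the
parabola `p² − 2pλ + 2pγ₁ = γ₂²` satisfies the differential equation
`λ − γ₁ + (γ₂/(2γ₁'γ₂'))·(γ₁'² − γ₂'²) = 0` derived from the billiard first integral
`F = (xv₂ − yv₁)v₂ + λv₁²`. -/
theorem example2_parabola (p lam P Q : ℝ) (hp : p ≠ 0) (γ₁ γ₂ γ₁' γ₂' : ℝ → ℝ)
    (hd₁ : ∀ t ∈ Set.Ioo P Q, HasDerivAt γ₁ (γ₁' t) t)
    (hd₂ : ∀ t ∈ Set.Ioo P Q, HasDerivAt γ₂ (γ₂' t) t)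
    (harc : ∀ t ∈ Set.Ioo P Q, γ₁' t ^ 2 + γ₂' t ^ 2 = 1)
    (hne : ∀ t ∈ Set.Ioo P Q, γ₁' t * γ₂' t ≠ 0)
    (hconic : ∀ t ∈ Set.Ioo P Q, p ^ 2 - 2 * p * lam + 2 * p * γ₁ t = γ₂ t ^ 2) :
    ∀ t ∈ Set.Ioo P Q,
      lam - γ₁ t + γ₂ t / (2 * γ₁' t * γ₂' t) * (γ₁' t ^ 2 - γ₂' t ^ 2) = 0 := by
  intro t ht
  -- derivative of the conic relation: p * γ₁' t = γ₂ t * γ₂' t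
  have hf : HasDerivAt (fun s => p ^ 2 - 2 * p * lam + 2 * p * γ₁ s - γ₂ s ^ 2)
      (2 * p * γ₁' t - 2 * γ₂ t * γ₂' t) t := by
    have h1 := ((hd₁ t ht).const_mul (2 * p)).const_add (p ^ 2 - 2 * p * lam)
    have h2 := (hd₂ t ht).fun_pow 2
    have := h1.fun_sub h2
    simpa [mul_comm, mul_assoc, mul_left_comm] using this
  have hzero : HasDerivAt (fun s => p ^ 2 - 2 * p * lam + 2 * p * γ₁ s - γ₂ s ^ 2)
      (0 : ℝ) t := by
    have heq : (fun s => p ^ 2 - 2 * p * lam + 2 * p * γ₁ s - γ₂ s ^ 2) =ᶠ[nhds t]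
        (fun _ => (0 : ℝ)) := by
      filter_upwards [isOpen_Ioo.mem_nhds ht] with s hs
      have := hconic s hs
      linarith
    exact (hasDerivAt_const t (0 : ℝ)).congr_of_eventuallyEq heq
  have hkey : p * γ₁' t = γ₂ t * γ₂' t := by
    have := hf.unique hzero
    linarith
  have h1 : γ₁' t ≠ 0 := fun h => hne t ht (by simp [h])
  have h2 : γ₂' t ≠ 0 := fun h => hne t ht (by simp [h])
  have hc := hconic t ht
  field_simp
  have hG : p * ((lam - γ₁ t) * (2 * γ₁' t * γ₂' t) + γ₂ t * (γ₁' t ^ 2 - γ₂' t ^ 2)) = 0 := by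
    linear_combination (-(γ₁' t * γ₂' t)) * hc + (γ₂ t * γ₁' t + p * γ₂' t) * hkey
  have h0 := (mul_eq_zero.mp hG).resolve_left hp
  linear_combination h0
end

section
/- Let a, λ ∈ ℝ with a ≠ 0 and a² − λ ≠ 0, and let γ = (γ₁, γ₂) : ℝ → ℝ² be a differentiable curve on an open interval I, parametrized by arc length (γ₁'(t)² + γ₂'(t)² = 1 for all t ∈ I), with γ₁'(t)·γ₂'(t) ≠ 0 for all t ∈ I. If γ lies on the conic γ₁(t)²/a² + γ₂(t)²/(a² − λ) = 1 for all t ∈ I, then γ satisfies the differential equation λ − γ₁(t)² + γ₂(t)² + (γ₁(t)γ₂(t)/(γ₁'(t)γ₂'(t)))·(γ₁'(t)² − γ₂'(t)²) = 0 for all t ∈ I. -/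
/-- Example 3 of the paper: an arc-length parametrized curve `γ = (γ₁, γ₂)` lying on the
conic `γ₁²/a² + γ₂²/(a² − λ) = 1` satisfies the differential equation
`λ − γ₁² + γ₂² + (γ₁γ₂/(γ₁'γ₂'))·(γ₁'² − γ₂'²) = 0` derived from the billiard first
integral `F = (xv₂ − yv₁)² + λv₁²`. -/
theorem example3_ellipse_hyperbola (a lam P Q : ℝ) (ha : a ≠ 0) (hal : a ^ 2 - lam ≠ 0)
    (γ₁ γ₂ γ₁' γ₂' : ℝ → ℝ)
    (hd₁ : ∀ t ∈ Set.Ioo P Q, HasDerivAt γ₁ (γ₁' t) t)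
    (hd₂ : ∀ t ∈ Set.Ioo P Q, HasDerivAt γ₂ (γ₂' t) t)
    (harc : ∀ t ∈ Set.Ioo P Q, γ₁' t ^ 2 + γ₂' t ^ 2 = 1)
    (hne : ∀ t ∈ Set.Ioo P Q, γ₁' t * γ₂' t ≠ 0)
    (hconic : ∀ t ∈ Set.Ioo P Q, γ₁ t ^ 2 / a ^ 2 + γ₂ t ^ 2 / (a ^ 2 - lam) = 1) :
    ∀ t ∈ Set.Ioo P Q,
      lam - γ₁ t ^ 2 + γ₂ t ^ 2
        + γ₁ t * γ₂ t / (γ₁' t * γ₂' t) * (γ₁' t ^ 2 - γ₂' t ^ 2) = 0 := by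
  intro t ht
  have hmem : Set.Ioo P Q ∈ nhds t := isOpen_Ioo.mem_nhds ht
  have hf : HasDerivAt (fun s => γ₁ s ^ 2 / a ^ 2 + γ₂ s ^ 2 / (a ^ 2 - lam))
      ((2 : ℕ) * γ₁ t ^ 1 * γ₁' t / a ^ 2 + (2 : ℕ) * γ₂ t ^ 1 * γ₂' t / (a ^ 2 - lam)) t :=
    (((hd₁ t ht).pow 2).div_const _).add (((hd₂ t ht).pow 2).div_const _)
  have hc : HasDerivAt (fun _ : ℝ => (1 : ℝ))
      ((2 : ℕ) * γ₁ t ^ 1 * γ₁' t / a ^ 2 + (2 : ℕ) * γ₂ t ^ 1 * γ₂' t / (a ^ 2 - lam)) t := by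
    refine hf.congr_of_eventuallyEq ?_
    filter_upwards [hmem] with s hs using (hconic s hs).symm
  have h1 : (2 : ℕ) * γ₁ t ^ 1 * γ₁' t / a ^ 2 + (2 : ℕ) * γ₂ t ^ 1 * γ₂' t / (a ^ 2 - lam)
      = 0 := hc.unique (hasDerivAt_const t 1)
  have hC := hconic t ht
  have hN := hne t ht
  have ha2 : (a : ℝ) ^ 2 ≠ 0 := pow_ne_zero 2 ha
  have h1' : (a ^ 2 - lam) * (γ₁ t * γ₁' t) + a ^ 2 * (γ₂ t * γ₂' t) = 0 := by
    field_simp at h1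
    push_cast at h1
    linarith [h1]
  have hC' : (a ^ 2 - lam) * γ₁ t ^ 2 + a ^ 2 * γ₂ t ^ 2 = a ^ 2 * (a ^ 2 - lam) := by
    field_simp at hC
    linarith [hC]
  have key : ((lam - γ₁ t ^ 2 + γ₂ t ^ 2) * (γ₁' t * γ₂' t)
      + γ₁ t * γ₂ t * (γ₁' t ^ 2 - γ₂' t ^ 2)) * (a ^ 2 * (a ^ 2 - lam)) = 0 := by
    linear_combination (a ^ 2 * (γ₂ t * γ₁' t) - (a ^ 2 - lam) * (γ₁ t * γ₂' t)) * h1'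
      - lam * (γ₁' t * γ₂' t) * hC'
  have key2 : (lam - γ₁ t ^ 2 + γ₂ t ^ 2) * (γ₁' t * γ₂' t)
      + γ₁ t * γ₂ t * (γ₁' t ^ 2 - γ₂' t ^ 2) = 0 := by
    rcases mul_eq_zero.1 key with h | h
    · exact h
    · exact absurd h (mul_ne_zero ha2 hal)
  have hN1 : γ₁' t ≠ 0 := left_ne_zero_of_mul hN
  have hN2 : γ₂' t ≠ 0 := right_ne_zero_of_mul hN
  field_simp
  linear_combination key2
end

section
/- Let n ∈ ℕ, let A be a real skew-symmetric n×n matrix (Aᵀ = −A), let γ₀ ∈ ℝⁿ, and define γ(t) = exp(tA)·γ₀. Define F : ℝⁿ × ℝⁿ → ℝ by F(x, v) = ⟨x, A·v⟩. Then γ is differentiable with γ'(t) = A·γ(t), and for every t ∈ ℝ and every v ∈ ℝⁿ one has F(γ(t), v) = −⟨γ'(t), v⟩. Consequently, if v, w ∈ ℝⁿ satisfy ⟨v, γ'(t)⟩ = ⟨w, γ'(t)⟩ (as happens under the wire billiard reflection at γ(t)), then F(γ(t), v) = F(γ(t), w). -/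
open Matrix

attribute [local instance] Matrix.linftyOpNormedAddCommGroup Matrix.linftyOpNormedRing
  Matrix.linftyOpNormedAlgebra

/-- Theorem 1 of the paper: the wire billiard defined by the curve `γ(t) = e^{tA}·γ₀`
with `A` skew-symmetric admits the first integral `F(x, v) = ⟨x, A·v⟩
= Σ_{i<j} a_{ij}(v_j x_i − v_i x_j)`: the curve satisfies `γ' = A·γ`, one has
`F(γ(t), v) = −⟨γ'(t), v⟩`, and hence `F(γ(t), ·)` takes equal values on any two
velocities having the same inner product with the tangent vector `γ'(t)`. -/
theorem wire_billiard_linear_integral (n : ℕ) (A : Matrix (Fin n) (Fin n) ℝ)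
    (hA : Aᵀ = -A) (γ₀ : Fin n → ℝ)
    (γ : ℝ → Fin n → ℝ) (hγ : γ = fun t => (NormedSpace.exp (t • A)).mulVec γ₀) :
    (∀ t : ℝ, HasDerivAt γ (A.mulVec (γ t)) t) ∧
    (∀ t : ℝ, ∀ v : Fin n → ℝ,
      dotProduct (γ t) (A.mulVec v) = -dotProduct (deriv γ t) v) ∧
    (∀ t : ℝ, ∀ v w : Fin n → ℝ,
      dotProduct v (deriv γ t) = dotProduct w (deriv γ t) →
      dotProduct (γ t) (A.mulVec v) = dotProduct (γ t) (A.mulVec w)) := by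
  have hderiv : ∀ t : ℝ, HasDerivAt γ (A.mulVec (γ t)) t := by
    intro t
    have h1 : HasDerivAt (fun u : ℝ => NormedSpace.exp (u • A))
        (A * NormedSpace.exp (t • A)) t := hasDerivAt_exp_smul_const' A t
    have L : (Fin n → ℝ) →L[ℝ] (Fin n → ℝ) := 0
    let M0 : Matrix (Fin n) (Fin n) ℝ →ₗ[ℝ] (Fin n → ℝ) :=
      { toFun := fun B => B.mulVec γ₀
        map_add' := fun B C => by ext i; simp [Matrix.add_mulVec]
        map_smul' := fun c B => by ext i; simp [Matrix.smul_mulVec] }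
    let M := LinearMap.toContinuousLinearMap M0
    have h2 := (M.hasFDerivAt.comp_hasDerivAt t h1)
    rw [hγ]
    refine h2.congr_deriv (Eq.symm ?_)
    show A.mulVec ((NormedSpace.exp (t • A)).mulVec γ₀)
        = (A * NormedSpace.exp (t • A)).mulVec γ₀
    rw [Matrix.mulVec_mulVec]
  have hd : ∀ t, deriv γ t = A.mulVec (γ t) := fun t => (hderiv t).deriv
  have key : ∀ t : ℝ, ∀ v : Fin n → ℝ,
      dotProduct (γ t) (A.mulVec v) = -dotProduct (deriv γ t) v := by
    intro t v
    rw [hd t, dotProduct_mulVec (γ t) A v, ← Matrix.mulVec_transpose, hA,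
      Matrix.neg_mulVec, neg_dotProduct]
  refine ⟨hderiv, key, fun t v w h => ?_⟩
  rw [key t v, key t w, dotProduct_comm (deriv γ t) v,
    dotProduct_comm (deriv γ t) w, h]
end

section
/- Let α, β ∈ ℝ with α ≠ 0, and let f : ℝ → ℝ be a differentiable function. Define r : {(u₁, u₂) ∈ ℝ² : u₂ ≠ 0} → ℝ³ by r(u₁, u₂) = (u₁, u₂, −(β/α)·arctan(u₁/u₂) + f(u₁² + u₂²)). Then at every point (u₁, u₂) with u₂ ≠ 0, the vector (−α·u₂, α·u₁, β) ∈ ℝ³ lies in the tangent plane of the surface: (−α·u₂)·(∂r/∂u₁)(u₁, u₂) + (α·u₁)·(∂r/∂u₂)(u₁, u₂) = (−α·u₂, α·u₁, β). Equivalently, for every v ∈ ℝ³, α(u₁v₂ − u₂v₁) + βv₃ = h₁·⟨v, ∂r/∂u₁⟩ + h₂·⟨v, ∂r/∂u₂⟩ with h₁ = −α·u₂ and h₂ = α·u₁. -/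
open Matrix

/-- Theorem 2 of the paper: for the surface
`r(u₁, u₂) = (u₁, u₂, −(β/α)·arctan(u₁/u₂) + f(u₁² + u₂²))`, at every point with
`u₂ ≠ 0` the vector `(−αu₂, αu₁, β)` lies in the tangent plane:
`(−αu₂)·r_{u₁} + (αu₁)·r_{u₂} = (−αu₂, αu₁, β)`; equivalently, for every velocity `v`,
`F = α(u₁v₂ − u₂v₁) + βv₃ = h₁·⟨v, r_{u₁}⟩ + h₂·⟨v, r_{u₂}⟩` with `h₁ = −αu₂`,
`h₂ = αu₁`, so `F` is a (local) billiard first integral of degree one. -/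
theorem surface_linear_integral (α β : ℝ) (hα : α ≠ 0) (f : ℝ → ℝ)
    (hf : Differentiable ℝ f)
    (r : ℝ → ℝ → Fin 3 → ℝ)
    (hr : r = fun u₁ u₂ =>
      ![u₁, u₂, -(β / α) * Real.arctan (u₁ / u₂) + f (u₁ ^ 2 + u₂ ^ 2)]) :
    ∀ u₁ u₂ : ℝ, u₂ ≠ 0 →
      (-(α * u₂)) • deriv (fun x => r x u₂) u₁ + (α * u₁) • deriv (fun y => r u₁ y) u₂
        = ![-(α * u₂), α * u₁, β] ∧
      ∀ v : Fin 3 → ℝ,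
        α * (u₁ * v 1 - u₂ * v 0) + β * v 2
          = (-(α * u₂)) * dotProduct v (deriv (fun x => r x u₂) u₁)
            + (α * u₁) * dotProduct v (deriv (fun y => r u₁ y) u₂) := by
  subst hr
  intro u₁ u₂ hu₂
  have hs : u₁ ^ 2 + u₂ ^ 2 ≠ 0 := by positivity
  -- derivative in the first variable
  have ha1 : HasDerivAt (fun x => Real.arctan (x / u₂)) (u₂ / (u₁ ^ 2 + u₂ ^ 2)) u₁ := by
    have h := (Real.hasDerivAt_arctan (u₁ / u₂)).comp u₁ ((hasDerivAt_id u₁).div_const u₂)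
    refine h.congr_deriv ?_
    field_simp
    ring
  have hb1 : HasDerivAt (fun x => f (x ^ 2 + u₂ ^ 2))
      (deriv f (u₁ ^ 2 + u₂ ^ 2) * (2 * u₁)) u₁ := by
    have h := ((hf (u₁ ^ 2 + u₂ ^ 2)).hasDerivAt).comp u₁
      (((hasDerivAt_id u₁).pow 2).add_const (u₂ ^ 2))
    refine h.congr_deriv ?_
    simp only [id_eq]
    push_cast
    ring
  have h1 : HasDerivAt (fun x => ![x, u₂, -(β / α) * Real.arctan (x / u₂) + f (x ^ 2 + u₂ ^ 2)])
      ![1, 0, -(β / α) * (u₂ / (u₁ ^ 2 + u₂ ^ 2)) + deriv f (u₁ ^ 2 + u₂ ^ 2) * (2 * u₁)] u₁ := by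
    rw [hasDerivAt_pi]
    intro i
    fin_cases i
    · exact hasDerivAt_id u₁
    · simpa using hasDerivAt_const u₁ u₂
    · exact (ha1.const_mul (-(β / α))).add hb1
  -- derivative in the second variable
  have ha2 : HasDerivAt (fun y => Real.arctan (u₁ / y)) (-u₁ / (u₁ ^ 2 + u₂ ^ 2)) u₂ := by
    have hinner : HasDerivAt (fun y : ℝ => u₁ / y) (u₁ * (-(u₂ ^ 2)⁻¹)) u₂ := by
      simpa [div_eq_mul_inv] using (hasDerivAt_inv hu₂).const_mul u₁
    have h := (Real.hasDerivAt_arctan (u₁ / u₂)).comp u₂ hinner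
    refine h.congr_deriv ?_
    field_simp
    ring
  have hb2 : HasDerivAt (fun y => f (u₁ ^ 2 + y ^ 2))
      (deriv f (u₁ ^ 2 + u₂ ^ 2) * (2 * u₂)) u₂ := by
    have h := ((hf (u₁ ^ 2 + u₂ ^ 2)).hasDerivAt).comp u₂
      (((hasDerivAt_id u₂).pow 2).const_add (u₁ ^ 2))
    refine h.congr_deriv ?_
    simp only [id_eq]
    push_cast
    ring
  have h2 : HasDerivAt (fun y => ![u₁, y, -(β / α) * Real.arctan (u₁ / y) + f (u₁ ^ 2 + y ^ 2)])
      ![0, 1, -(β / α) * (-u₁ / (u₁ ^ 2 + u₂ ^ 2)) + deriv f (u₁ ^ 2 + u₂ ^ 2) * (2 * u₂)] u₂ := by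
    rw [hasDerivAt_pi]
    intro i
    fin_cases i
    · simpa using hasDerivAt_const u₂ u₁
    · exact hasDerivAt_id u₂
    · exact (ha2.const_mul (-(β / α))).add hb2
  rw [show (fun x => (fun u₁ u₂ =>
      ![u₁, u₂, -(β / α) * Real.arctan (u₁ / u₂) + f (u₁ ^ 2 + u₂ ^ 2)]) x u₂)
      = fun x => ![x, u₂, -(β / α) * Real.arctan (x / u₂) + f (x ^ 2 + u₂ ^ 2)] from rfl,
    show (fun y => (fun u₁ u₂ =>
      ![u₁, u₂, -(β / α) * Real.arctan (u₁ / u₂) + f (u₁ ^ 2 + u₂ ^ 2)]) u₁ y)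
      = fun y => ![u₁, y, -(β / α) * Real.arctan (u₁ / y) + f (u₁ ^ 2 + y ^ 2)] from rfl,
    h1.deriv, h2.deriv]
  constructor
  · funext i
    fin_cases i <;>
      simp only [Pi.add_apply, Pi.smul_apply, Matrix.cons_val_zero, Matrix.cons_val_one,
        Matrix.head_cons, Matrix.cons_val_two, Matrix.tail_cons, smul_eq_mul, Fin.zero_eta, Fin.mk_one, Fin.reduceFinMk] <;>
      field_simp <;> ring
  · intro v
    simp only [dotProduct, Fin.sum_univ_three, Matrix.cons_val_zero, Matrix.cons_val_one,
      Matrix.head_cons, Matrix.cons_val_two, Matrix.tail_cons]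
    field_simp
    ring
end

section
/- Let b, c, s ∈ ℝ with b ≠ 0 and s ≠ 0, and define f : ℝ → ℝ by f(t) = s·t + (4sc − b)/(4sb). Then f satisfies the differential equation 𝓕(t, f(t), f'(t)) = 0 for all t ∈ ℝ, where 𝓕(t, f, f') := b + 4(a·t − c)·f' − 4a·f²·f' − 4b·t·f'² − f·(2a − 4b·f' − 8a·t·f'²) with a = 0; explicitly, b − 4c·f'(t) − 4b·t·f'(t)² + 4b·f(t)·f'(t) = 0 for all t ∈ ℝ. -/
/-! For an affine `f t = s * t + k` the two terms of the equation that depend on `t` cancel, so the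
equation reduces to the condition `b + 4 * s * (b * k - c) = 0` on the intercept `k`, which
`k = (4 * s * c - b) / (4 * s * b)` satisfies. -/

theorem deriv_const_mul_add_const {𝕜 : Type*} [NontriviallyNormedField 𝕜] (m k x : 𝕜) :
    deriv (fun t => m * t + k) x = m := by
  rw [deriv_add_const, deriv_const_mul_field, deriv_id'', mul_one]

theorem paraboloid_ode_of_affine {R : Type*} [CommRing R] (b c s k t : R) :
    b - 4 * c * s - 4 * b * t * s ^ 2 + 4 * b * (s * t + k) * s = b + 4 * s * (b * k - c) := by
  ring

theorem four_mul_mul_paraboloid_intercept {K : Type*} [Field K] [CharZero K] {b s : K} (c : K)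
    (hb : b ≠ 0) (hs : s ≠ 0) : 4 * s * (b * ((4 * s * c - b) / (4 * s * b)) - c) = -b := by
  field_simp
  ring

/-- Section 4 of the paper, case `a = 0`: the function
`f(t) = s·t + (4sc − b)/(4sb)` solves the ODE
`𝓕(t, f, f') = b + 4(at − c)f' − 4af²f' − 4btf'² − f(2a − 4bf' − 8atf'²) = 0` with
`a = 0`, i.e. `b − 4c·f' − 4b·t·f'² + 4b·f·f' = 0`. -/
theorem paraboloid_family_solves_ode (b c s : ℝ) (hb : b ≠ 0) (hs : s ≠ 0)
    (f : ℝ → ℝ) (hf : f = fun t => s * t + (4 * s * c - b) / (4 * s * b)) :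
    ∀ t : ℝ,
      b - 4 * c * deriv f t - 4 * b * t * (deriv f t) ^ 2
        + 4 * b * f t * deriv f t = 0 := by
  intro t
  subst hf
  rw [deriv_const_mul_add_const, paraboloid_ode_of_affine,
    four_mul_mul_paraboloid_intercept c hb hs, add_neg_cancel]
end

section
/- Let a, b, c, s ∈ ℝ with a ≠ 0 and 4a²s − b² + 4ac ≠ 0, and set 𝓐 = 4a²s/(4a²s − b² + 4ac). Define f(t) = b/(2a) + √(s − 𝓐·t) on the open set of t ∈ ℝ where s − 𝓐·t > 0. Then f satisfies, for all such t, the differential equation 𝓕(t, f(t), f'(t)) = 0, where 𝓕(t, f, f') := b + 4(a·t − c)·f' − 4a·f²·f' − 4b·t·f'² − f·(2a − 4b·f' − 8a·t·f'²). (The same holds for f(t) = b/(2a) − √(s − 𝓐·t).) Equivalently, any differentiable f satisfying (f(t) − b/(2a))² + 𝓐·t − s = 0 with f(t) ≠ b/(2a) solves the ODE. -/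
lemma key_ode (a b c s A t y p : ℝ) (ha : a ≠ 0) (hg : y - b / (2*a) ≠ 0)
    (h1 : (y - b / (2*a))^2 + A*t - s = 0) (h2 : 2*(y - b/(2*a))*p + A = 0)
    (h3 : A * (4*a^2*s - b^2 + 4*a*c) = 4*a^2*s) :
    b + 4*(a*t-c)*p - 4*a*y^2*p - 4*b*t*p^2 - y*(2*a - 4*b*p - 8*a*t*p^2) = 0 := by
  set k := b/(2*a) with hkdef
  have hb : b = 2*a*k := by rw [hkdef]; field_simp
  rw [hb] at h3 ⊢
  have hne : 2*a*(y-k) ≠ 0 := mul_ne_zero (by simp [ha]) hg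
  have H : (2*a*(y-k)) * (2*a*k + 4*(a*t-c)*p - 4*a*y^2*p - 4*(2*a*k)*t*p^2
      - y*(2*a - 4*(2*a*k)*p - 8*a*t*p^2)) = 0 := by
    linear_combination (4*a^2*A - 4*a^2) * h1
      + (4*a^2*t - 4*a*c + 4*a^2*k^2 - 4*a^2*(y-k)^2 + 4*a^2*t*(2*(y-k)*p - A)) * h2 + h3
  exact (mul_eq_zero.mp H).resolve_left hne

/-- Section 4 of the paper, case `a ≠ 0`: with `𝓐 = 4a²s/(4a²s − b² + 4ac)`, the
functions `f(t) = b/(2a) ± √(s − 𝓐t)` (defined where `s − 𝓐t > 0`) solve the ODE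
`𝓕(t, f, f') = b + 4(at − c)f' − 4af²f' − 4btf'² − f(2a − 4bf' − 8atf'²) = 0`;
equivalently, any differentiable `f` satisfying `(f(t) − b/(2a))² + 𝓐t − s = 0` with
`f(t) ≠ b/(2a)` on an open set solves the ODE there. -/
theorem conic_family_solves_ode (a b c s : ℝ) (ha : a ≠ 0)
    (hden : 4 * a ^ 2 * s - b ^ 2 + 4 * a * c ≠ 0)
    (𝓐 : ℝ) (h𝓐 : 𝓐 = 4 * a ^ 2 * s / (4 * a ^ 2 * s - b ^ 2 + 4 * a * c))
    (𝓕 : ℝ → ℝ → ℝ → ℝ)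
    (h𝓕 : 𝓕 = fun t y y' =>
      b + 4 * (a * t - c) * y' - 4 * a * y ^ 2 * y' - 4 * b * t * y' ^ 2
        - y * (2 * a - 4 * b * y' - 8 * a * t * y' ^ 2)) :
    (∀ t : ℝ, 0 < s - 𝓐 * t →
      𝓕 t (b / (2 * a) + Real.sqrt (s - 𝓐 * t))
        (deriv (fun τ => b / (2 * a) + Real.sqrt (s - 𝓐 * τ)) t) = 0) ∧
    (∀ t : ℝ, 0 < s - 𝓐 * t →
      𝓕 t (b / (2 * a) - Real.sqrt (s - 𝓐 * t))
        (deriv (fun τ => b / (2 * a) - Real.sqrt (s - 𝓐 * τ)) t) = 0) ∧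
    (∀ (f f' : ℝ → ℝ) (U : Set ℝ), IsOpen U →
      (∀ t ∈ U, HasDerivAt f (f' t) t) →
      (∀ t ∈ U, (f t - b / (2 * a)) ^ 2 + 𝓐 * t - s = 0) →
      (∀ t ∈ U, f t ≠ b / (2 * a)) →
      ∀ t ∈ U, 𝓕 t (f t) (f' t) = 0) := by
  have h3 : 𝓐 * (4*a^2*s - b^2 + 4*a*c) = 4*a^2*s := by
    rw [h𝓐]; field_simp
  have hsqrtderiv : ∀ t : ℝ, 0 < s - 𝓐 * t →
      HasDerivAt (fun τ => Real.sqrt (s - 𝓐 * τ))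
        (1 / (2 * Real.sqrt (s - 𝓐 * t)) * (-(𝓐 * 1))) t := by
    intro t ht
    have hin : HasDerivAt (fun τ : ℝ => s - 𝓐 * τ) (-(𝓐 * 1)) t :=
      ((hasDerivAt_id t).const_mul 𝓐).const_sub s
    exact (Real.hasDerivAt_sqrt ht.ne').comp t hin
  have hs : ∀ t : ℝ, 0 < s - 𝓐 * t → Real.sqrt (s - 𝓐 * t) ≠ 0 := fun t ht =>
    (Real.sqrt_pos.mpr ht).ne'
  refine ⟨?_, ?_, ?_⟩
  · intro t ht
    have hd : HasDerivAt (fun τ => b / (2 * a) + Real.sqrt (s - 𝓐 * τ))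
        (1 / (2 * Real.sqrt (s - 𝓐 * t)) * (-(𝓐 * 1))) t :=
      (hsqrtderiv t ht).const_add _
    rw [hd.deriv, h𝓕]
    refine key_ode a b c s 𝓐 t _ _ ha (by simpa using hs t ht) ?_ ?_ h3
    · have := Real.sq_sqrt ht.le
      ring_nf
      ring_nf at this
      linarith [this]
    · field_simp; ring
  · intro t ht
    have hd : HasDerivAt (fun τ => b / (2 * a) - Real.sqrt (s - 𝓐 * τ))
        (-(1 / (2 * Real.sqrt (s - 𝓐 * t)) * (-(𝓐 * 1)))) t :=
      (hsqrtderiv t ht).const_sub _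
    rw [hd.deriv, h𝓕]
    refine key_ode a b c s 𝓐 t _ _ ha (by simpa using hs t ht) ?_ ?_ h3
    · have := Real.sq_sqrt ht.le
      ring_nf
      ring_nf at this
      linarith [this]
    · field_simp; ring
  · intro f f' U hU hf heq hne t ht
    have hd : HasDerivAt (fun τ => (f τ - b / (2 * a)) ^ 2 + 𝓐 * τ - s)
        (2 * (f t - b / (2 * a)) * f' t + 𝓐) t := by
      have h1 : HasDerivAt (fun τ => (f τ - b / (2 * a)) ^ 2)
          (2 * (f t - b / (2 * a)) ^ 1 * f' t) t := ((hf t ht).sub_const _).pow 2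
      have h2 : HasDerivAt (fun τ : ℝ => 𝓐 * τ) (𝓐 * 1) t :=
        (hasDerivAt_id t).const_mul 𝓐
      have := (h1.add h2).sub_const s
      refine this.congr_deriv ?_
      ring
    have hd0 : HasDerivAt (fun τ => (f τ - b / (2 * a)) ^ 2 + 𝓐 * τ - s) 0 t := by
      refine (hasDerivAt_const t 0).congr_of_eventuallyEq ?_
      filter_upwards [hU.mem_nhds ht] with x hx using heq x hx
    have h2' : 2 * (f t - b / (2 * a)) * f' t + 𝓐 = 0 := hd.unique hd0
    rw [h𝓕]
    exact key_ode a b c s 𝓐 t (f t) (f' t) ha (sub_ne_zero.mpr (hne t ht))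
      (heq t ht) h2' h3
end
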